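/- Let (X,G,Φ) be a Cantor action and let f ∈ G(Φ) be a non-Hausdorff element at x ∈ X. Then f has infinitely many conjugates in the isotropy group of x: the set of maps h ∈ C(X,X) such that h(x) = x and h = k' ∘ f ∘ k for some k, k' ∈ G(Φ) with k ∘ k' = k' ∘ k = id_X, is infinite. (Consequently, if every element of the isotropy group of the closure at x has only finitely many of its G(Φ)-conjugates lying in that isotropy group, then no element of G(Φ) is non-Hausdorff at x.) -/

import Mathlib

open Set Topology Filter

section CantorActionDefs

variable {X : Type*} [MetricSpace X] {G : Type*} [Group G]

/-- `Φ : G → Homeo(X)` is a group homomorphism, i.e. an action of `G` on `X` by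
homeomorphisms. -/
def IsActionHom (Φ : G → X ≃ₜ X) : Prop :=
  (∀ x : X, Φ 1 x = x) ∧ ∀ g h : G, ∀ x : X, Φ (g * h) x = Φ g (Φ h x)

/-- The action is minimal: every orbit is dense. -/
def IsMinimalAction (Φ : G → X ≃ₜ X) : Prop :=
  ∀ x : X, Dense (Set.range fun g : G => Φ g x)

/-- The family `{Φ g : g ∈ G}` is equicontinuous with respect to the metric on `X`. -/
def IsEquicontinuousAction (Φ : G → X ≃ₜ X) : Prop :=
  ∀ ε : ℝ, 0 < ε → ∃ δ : ℝ, 0 < δ ∧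
    ∀ g : G, ∀ x y : X, dist x y < δ → dist (Φ g x) (Φ g y) < ε

/-- A Cantor action: a minimal equicontinuous action by homeomorphisms. -/
def IsCantorAction (Φ : G → X ≃ₜ X) : Prop :=
  IsActionHom Φ ∧ IsMinimalAction Φ ∧ IsEquicontinuousAction Φ

/-- A clopen subset adapted to the action: nonempty, clopen, and any translate meeting it
equals it. -/
def IsAdapted (Φ : G → X ≃ₜ X) (U : Set X) : Prop :=
  U.Nonempty ∧ IsClopen U ∧ ∀ g : G, (Φ g '' U ∩ U).Nonempty → Φ g '' U = U

/-- The Ellis (closure) group `G(Φ)`: the closure of `{Φ g : g ∈ G}` in `C(X,X)` with the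
compact-open topology. -/
def actionClosure (Φ : G → X ≃ₜ X) : Set C(X, X) :=
  closure (Set.range fun g : G => (Φ g : C(X, X)))

/-- An adapted neighborhood basis at `x`: a properly descending chain of adapted clopen
sets starting at `X`, containing `x`, with intersection `{x}`. -/
def IsAdaptedBasis (Φ : G → X ≃ₜ X) (x : X) (U : ℕ → Set X) : Prop :=
  U 0 = Set.univ ∧ (∀ ℓ : ℕ, IsAdapted Φ (U ℓ)) ∧ (∀ ℓ : ℕ, x ∈ U ℓ) ∧
    (∀ ℓ : ℕ, U (ℓ + 1) ⊂ U ℓ) ∧ (⋂ ℓ : ℕ, U ℓ) = ({x} : Set X)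

/-- The stabilizer chain `K_ℓ`: elements of the Ellis group fixing `U ℓ` pointwise. -/
def stabChain (Φ : G → X ≃ₜ X) (U : ℕ → Set X) (ℓ : ℕ) : Set C(X, X) :=
  {f ∈ actionClosure Φ | ∀ z ∈ U ℓ, f z = z}

/-- The stabilizer chain is eventually constant (the action is stable along `U`). -/
def IsStableChain (Φ : G → X ≃ₜ X) (U : ℕ → Set X) : Prop :=
  ∃ ℓ₀ : ℕ, ∀ ℓ : ℕ, ℓ₀ ≤ ℓ → stabChain Φ U ℓ = stabChain Φ U ℓ₀

/-- The action of the Ellis group is locally completely quasi-analytic. -/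
def IsLCQA (Φ : G → X ≃ₜ X) : Prop :=
  ∃ ε : ℝ, 0 < ε ∧ ∀ U : Set X, IsAdapted Φ U → Metric.diam U < ε →
    ∀ V : Set X, IsAdapted Φ V → V ⊆ U →
      ∀ f₁ ∈ actionClosure Φ, ∀ f₂ ∈ actionClosure Φ,
        (∀ z ∈ V, f₁ z = f₂ z) → ∀ z ∈ U, f₁ z = f₂ z

/-- `f` is a non-Hausdorff element of the Ellis group at `x`. -/
def IsNonHausdorffElem (Φ : G → X ≃ₜ X) (f : C(X, X)) (x : X) : Prop :=
  f ∈ actionClosure Φ ∧ f x = x ∧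
    (∀ W : Set X, IsClopen W → x ∈ W → ¬ ∀ z ∈ W, f z = z) ∧
    ∃ (xs : ℕ → X) (W : ℕ → Set X), Filter.Tendsto xs Filter.atTop (nhds x) ∧
      ∀ i : ℕ, xs i ∈ W i ∧ IsClopen (W i) ∧ ⇑f '' W i = W i ∧ ∀ z ∈ W i, f z = z

/-- The restrictions to an invariant set `U` of the maps `Φ g` with `Φ g (U) = U`,
as elements of `C(U,U)`. -/
def restrictedMaps (Φ : G → X ≃ₜ X) (U : Set X) : Set C(U, U) :=
  {u : C(U, U) | ∃ g : G, Φ g '' U = U ∧ ∀ z : U, (u z : X) = Φ g (z : X)}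

/-- The stabilizer subgroup `G_U = {g : G | Φ g (U) = U}` of a set `U`. -/
def setStabilizer (Φ : G → X ≃ₜ X) (hΦ : IsActionHom Φ) (U : Set X) : Subgroup G where
  carrier := {g : G | Φ g '' U = U}
  one_mem' := by
    show ⇑(Φ 1) '' U = U
    have h : ⇑(Φ 1) = id := funext hΦ.1
    rw [h, Set.image_id]
  mul_mem' := by
    intro a b ha hb
    show ⇑(Φ (a * b)) '' U = U
    have h : ⇑(Φ (a * b)) = ⇑(Φ a) ∘ ⇑(Φ b) := funext fun z => hΦ.2 a b z
    rw [h, Set.image_comp]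
    rw [show ⇑(Φ b) '' U = U from hb, show ⇑(Φ a) '' U = U from ha]
  inv_mem' := by
    intro a ha
    show ⇑(Φ a⁻¹) '' U = U
    have hcomp : ⇑(Φ a⁻¹) ∘ ⇑(Φ a) = id := funext fun z => by
      show Φ a⁻¹ (Φ a z) = z
      have h2 := hΦ.2 a⁻¹ a z
      rw [inv_mul_cancel] at h2
      rw [← h2]
      exact hΦ.1 z
    calc ⇑(Φ a⁻¹) '' U = ⇑(Φ a⁻¹) '' (⇑(Φ a) '' U) := by
            rw [show ⇑(Φ a) '' U = U from ha]
      _ = (⇑(Φ a⁻¹) ∘ ⇑(Φ a)) '' U := (Set.image_comp _ _ _).symm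
      _ = U := by rw [hcomp, Set.image_id]

end CantorActionDefs

section ChainDefs

variable {G : Type*} [Group G]

/-- A group chain in `G`: descending subgroups starting at `G`, each of finite index in
the previous one. -/
def IsGroupChain (K : ℕ → Subgroup G) : Prop :=
  K 0 = ⊤ ∧ ∀ ℓ : ℕ, K (ℓ + 1) ≤ K ℓ ∧ (K (ℓ + 1)).relIndex (K ℓ) ≠ 0

/-- The inverse limit `lim← G ⧸ C ℓ` of the coset spaces along a chain, as a subset of
the product. -/
def chainLimitSet (C : ℕ → Subgroup G) : Set (∀ ℓ : ℕ, G ⧸ C ℓ) :=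
  {σ | ∀ ℓ : ℕ, ∃ g : G, σ ℓ = (g : G ⧸ C ℓ) ∧ σ (ℓ + 1) = (g : G ⧸ C (ℓ + 1))}

/-- The inverse limit topology on `lim← G ⧸ C ℓ`: the subspace topology from the product
of the discrete coset spaces. -/
def chainLimitTop (C : ℕ → Subgroup G) : TopologicalSpace (chainLimitSet C) :=
  TopologicalSpace.induced Subtype.val
    (@Pi.topologicalSpace ℕ (fun ℓ => G ⧸ C ℓ) fun _ => ⊥)

/-- The basepoint `(e C_ℓ)_ℓ` of the inverse limit. -/
def chainBasepoint (C : ℕ → Subgroup G) : chainLimitSet C :=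
  ⟨fun ℓ => ((1 : G) : G ⧸ C ℓ), fun _ => ⟨1, rfl, rfl⟩⟩

theorem smul_mem_chainLimitSet {C : ℕ → Subgroup G} (g : G) {σ : ∀ ℓ : ℕ, G ⧸ C ℓ}
    (hσ : σ ∈ chainLimitSet C) : (fun ℓ => g • σ ℓ) ∈ chainLimitSet C := by
  intro ℓ
  obtain ⟨k, h1, h2⟩ := hσ ℓ
  refine ⟨g * k, ?_, ?_⟩
  · show g • σ ℓ = _
    rw [h1]; rfl
  · show g • σ (ℓ + 1) = _
    rw [h2]; rfl

/-- The conjugate subgroup `g H g⁻¹`. -/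
def conjSubgroup (g : G) (H : Subgroup G) : Subgroup G :=
  H.map (MulAut.conj g).toMonoidHom

/-- Equivalence of group chains (interlacing). -/
def ChainsEquivalent (Gc Hc : ℕ → Subgroup G) : Prop :=
  ∃ K : ℕ → Subgroup G, IsGroupChain K ∧
    ∃ ls js : ℕ → ℕ, StrictMono ls ∧ StrictMono js ∧
      ∀ k : ℕ, K (2 * k) = Gc (ls k) ∧ K (2 * k + 1) = Hc (js k)

/-- Conjugate equivalence of group chains. -/
def ChainsConjugateEquivalent (Gc Hc : ℕ → Subgroup G) : Prop :=
  ∃ gs : ℕ → G, (∀ ℓ : ℕ, (gs ℓ)⁻¹ * gs (ℓ + 1) ∈ Gc ℓ) ∧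
    ChainsEquivalent (fun ℓ => conjSubgroup (gs ℓ) (Gc ℓ)) Hc

end ChainDefs

section TwoSpaces

variable {X : Type*} [MetricSpace X] {X' : Type*} [MetricSpace X']
variable {G : Type*} [Group G] {G' : Type*} [Group G']

/-- A continuous orbit equivalence between two actions, implemented by a homeomorphism
`h : X → X'` with locally constant orbit transfer functions. -/
def IsContinuousOrbitEquivalence (Φ : G → X ≃ₜ X) (Ψ : G' → X' ≃ₜ X') (h : X ≃ₜ X') :
    Prop :=
  (∀ (x : X) (g : G), ∃ (k : G') (O : Set X), IsOpen O ∧ x ∈ O ∧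
      ∀ z ∈ O, Ψ k (h z) = h (Φ g z)) ∧
    ∀ (y : X') (k : G'), ∃ (g : G) (O : Set X'), IsOpen O ∧ y ∈ O ∧
      ∀ w ∈ O, Φ g (h.symm w) = h.symm (Ψ k w)

end TwoSpaces

/-!
Conjugating `f` by a `g ∈ G` that moves `x` into one of the clopen sets fixed pointwise by `f`
gives a conjugate fixing `x` that is the identity on a clopen neighbourhood of `x`.
Minimality and equicontinuity allow such a `g` with `g⁻¹ x` arbitrarily close to `x`; since `f`
is not the identity on any clopen neighbourhood of `x`, the conjugate is then not the identity
on a prescribed clopen neighbourhood `V` of `x`. Finitely many conjugates, each the identity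
near `x`, would be the identity on a common clopen neighbourhood, so there are infinitely many.
-/

section ClopenNhd

variable {X : Type*} [TopologicalSpace X]

def IsIdOnClopenNhd (h : X → X) (x : X) : Prop :=
  ∃ V : Set X, IsClopen V ∧ x ∈ V ∧ ∀ z ∈ V, h z = z

theorem IsIdOnClopenNhd.apply_eq {h : X → X} {x : X} (hh : IsIdOnClopenNhd h x) : h x = x :=
  let ⟨_, _, hxV, hV⟩ := hh; hV x hxV

theorem isOpen_setOf_isIdOnClopenNhd (h : X → X) : IsOpen {x | IsIdOnClopenNhd h x} :=
  isOpen_iff_forall_mem_open.mpr fun _ ⟨V, hVc, hxV, hV⟩ =>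
    ⟨V, fun _ hz => ⟨V, hVc, hz, hV⟩, hVc.isOpen, hxV⟩

theorem Set.infinite_of_forall_isClopen_exists_ne {F : Type*} [FunLike F X X] {T : Set F}
    {x : X} (hT : ∀ h ∈ T, IsIdOnClopenNhd h x)
    (hne : ∀ V : Set X, IsClopen V → x ∈ V → ∃ h ∈ T, ∃ z ∈ V, h z ≠ z) : T.Infinite := by
  intro hfin
  choose! V hVc hxV hV using hT
  obtain ⟨h, hh, z, hz, hhz⟩ := hne (⋂ h ∈ T, V h) (hfin.isClopen_biInter hVc)
    (mem_iInter₂.mpr hxV)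
  exact hhz (hV h hh z (mem_iInter₂.mp hz h hh))

end ClopenNhd

section EllisConjugates

variable {X : Type*} [MetricSpace X] {G : Type*} {Φ : G → X ≃ₜ X}

theorem IsNonHausdorffElem.mem_closure_setOf_isIdOnClopenNhd {f : C(X, X)} {x : X}
    (hf : IsNonHausdorffElem Φ f x) : x ∈ closure {z | IsIdOnClopenNhd f z} := by
  obtain ⟨-, -, -, xs, W, hxs, hW⟩ := hf
  exact mem_closure_of_tendsto hxs (Eventually.of_forall fun i =>
    ⟨W i, (hW i).2.1, (hW i).1, (hW i).2.2.2⟩)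

theorem IsNonHausdorffElem.not_isIdOnClopenNhd {f : C(X, X)} {x : X}
    (hf : IsNonHausdorffElem Φ f x) : ¬ IsIdOnClopenNhd f x :=
  fun ⟨W, hWc, hxW, hW⟩ => hf.2.2.1 W hWc hxW hW

variable [Group G]

theorem IsActionHom.apply_inv_apply (hΦ : IsActionHom Φ) (g : G) (z : X) :
    Φ g (Φ g⁻¹ z) = z := by
  rw [← hΦ.2, mul_inv_cancel, hΦ.1]

theorem IsActionHom.inv_apply_apply (hΦ : IsActionHom Φ) (g : G) (z : X) :
    Φ g⁻¹ (Φ g z) = z := by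
  rw [← hΦ.2, inv_mul_cancel, hΦ.1]

variable (Φ) in
def conjBy (g : G) (f : C(X, X)) : C(X, X) :=
  ((Φ g⁻¹ : C(X, X)).comp f).comp (Φ g)

@[simp]
theorem conjBy_apply (g : G) (f : C(X, X)) (z : X) : conjBy Φ g f z = Φ g⁻¹ (f (Φ g z)) :=
  rfl

theorem IsActionHom.exists_conjBy_eq (hΦ : IsActionHom Φ) (g : G) (f : C(X, X)) :
    ∃ k ∈ actionClosure Φ, ∃ k' ∈ actionClosure Φ,
      k.comp k' = ContinuousMap.id X ∧ k'.comp k = ContinuousMap.id X ∧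
      conjBy Φ g f = (k'.comp f).comp k :=
  ⟨Φ g, subset_closure ⟨g, rfl⟩, Φ g⁻¹, subset_closure ⟨g⁻¹, rfl⟩,
    ContinuousMap.ext (hΦ.apply_inv_apply g), ContinuousMap.ext (hΦ.inv_apply_apply g), rfl⟩

theorem IsActionHom.isIdOnClopenNhd_conjBy (hΦ : IsActionHom Φ) {g : G} {f : C(X, X)}
    {x : X} (hf : IsIdOnClopenNhd f (Φ g x)) : IsIdOnClopenNhd (conjBy Φ g f) x :=
  let ⟨V, hVc, hxV, hV⟩ := hf
  ⟨Φ g ⁻¹' V, hVc.preimage (Φ g).continuous, hxV, fun z hz => by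
    rw [conjBy_apply, hV _ hz, hΦ.inv_apply_apply]⟩

theorem IsActionHom.exists_conjBy_apply_ne (hΦ : IsActionHom Φ) {g : G} {f : C(X, X)}
    {x : X} (hf : ¬ IsIdOnClopenNhd f x) {V : Set X} (hVc : IsClopen V) (hgx : Φ g⁻¹ x ∈ V) :
    ∃ z ∈ V, conjBy Φ g f z ≠ z := by
  obtain ⟨y, hyV, hfy⟩ : ∃ y ∈ Φ g⁻¹ ⁻¹' V, f y ≠ y := by
    by_contra! hfix
    exact hf ⟨_, hVc.preimage (Φ g⁻¹).continuous, hgx, hfix⟩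
  refine ⟨Φ g⁻¹ y, hyV, fun h => hfy ((Φ g⁻¹).injective ?_)⟩
  rwa [conjBy_apply, hΦ.apply_inv_apply] at h

/-- Minimality moves `x` into `O`; equicontinuity of the inverses then keeps `Φ g⁻¹ x`
close to `x` as soon as `Φ g x` is close to `x`. -/
theorem IsCantorAction.exists_apply_mem_dist_inv_apply_lt (hΦ : IsCantorAction Φ) {O : Set X}
    (hO : IsOpen O) {x : X} (hx : x ∈ closure O) {ε : ℝ} (hε : 0 < ε) :
    ∃ g : G, Φ g x ∈ O ∧ dist (Φ g⁻¹ x) x < ε := by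
  obtain ⟨hact, hmin, hequi⟩ := hΦ
  obtain ⟨δ, hδ, hδε⟩ := hequi ε hε
  obtain ⟨_, ⟨g, rfl⟩, hgx, hgO⟩ := (hmin x).exists_mem_open (Metric.isOpen_ball.inter hO)
    (mem_closure_iff.mp hx _ Metric.isOpen_ball (Metric.mem_ball_self hδ))
  refine ⟨g, hgO, ?_⟩
  simpa [dist_comm, hact.inv_apply_apply] using hδε g⁻¹ _ _ hgx

theorem IsNonHausdorffElem.exists_conjBy (hΦ : IsCantorAction Φ) {f : C(X, X)} {x : X}
    (hf : IsNonHausdorffElem Φ f x) {V : Set X} (hVc : IsClopen V) (hxV : x ∈ V) :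
    ∃ g : G, IsIdOnClopenNhd (conjBy Φ g f) x ∧ ∃ z ∈ V, conjBy Φ g f z ≠ z := by
  obtain ⟨ε, hε, hεV⟩ := Metric.isOpen_iff.mp hVc.isOpen x hxV
  obtain ⟨g, hgx, hgV⟩ := hΦ.exists_apply_mem_dist_inv_apply_lt
    (isOpen_setOf_isIdOnClopenNhd f) hf.mem_closure_setOf_isIdOnClopenNhd hε
  exact ⟨g, hΦ.1.isIdOnClopenNhd_conjBy hgx,
    hΦ.1.exists_conjBy_apply_ne hf.not_isIdOnClopenNhd hVc (hεV hgV)⟩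

end EllisConjugates

theorem stmt19_general {X : Type*} [MetricSpace X]
    {G : Type*} [Group G] (Φ : G → X ≃ₜ X) (hΦ : IsCantorAction Φ)
    (f : C(X, X)) (x : X) (hf : IsNonHausdorffElem Φ f x) :
    {h : C(X, X) | h x = x ∧ ∃ k ∈ actionClosure Φ, ∃ k' ∈ actionClosure Φ,
        k.comp k' = ContinuousMap.id X ∧ k'.comp k = ContinuousMap.id X ∧
        h = (k'.comp f).comp k}.Infinite := by
  refine (Set.infinite_of_forall_isClopen_exists_ne
    (x := x) (T := (conjBy Φ · f) '' {g | IsIdOnClopenNhd (conjBy Φ g f) x}) ?_ ?_).mono ?_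
  · rintro _ ⟨g, hg, rfl⟩
    exact hg
  · intro V hVc hxV
    obtain ⟨g, hg, z, hzV, hgz⟩ := hf.exists_conjBy hΦ hVc hxV
    exact ⟨_, ⟨g, hg, rfl⟩, z, hzV, hgz⟩
  · rintro _ ⟨g, hg, rfl⟩
    exact ⟨hg.apply_eq, hΦ.1.exists_conjBy_eq g f⟩

/-- A non-Hausdorff element at `x` has infinitely many conjugates under
the Ellis group lying in the isotropy group of `x`. -/
theorem stmt19 {X : Type*} [MetricSpace X] [CompactSpace X] [TotallyDisconnectedSpace X]
    [Nonempty X] (hX : Perfect (Set.univ : Set X))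
    {G : Type*} [Group G] [Countable G] (Φ : G → X ≃ₜ X) (hΦ : IsCantorAction Φ)
    (f : C(X, X)) (x : X) (hf : IsNonHausdorffElem Φ f x) :
    {h : C(X, X) | h x = x ∧ ∃ k ∈ actionClosure Φ, ∃ k' ∈ actionClosure Φ,
        k.comp k' = ContinuousMap.id X ∧ k'.comp k = ContinuousMap.id X ∧
        h = (k'.comp f).comp k}.Infinite :=
  stmt19_general Φ hΦ f x hf
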